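/- For every ε > 0, I₁(ε)² - I₀(ε) I₂(ε) > 0, where I_k denotes the modified Bessel function of the first kind of order k. -/

import Mathlib

open MeasureTheory Filter

/-- Bessel function of the first kind of order `k` (integral representation). -/
noncomputable def besselJ (k : ℕ) (r : ℝ) : ℝ :=
  (r / 2) ^ k / (Real.sqrt Real.pi * Real.Gamma ((k : ℝ) + 1 / 2)) *
    ∫ θ in (0:ℝ)..Real.pi, Real.cos (r * Real.cos θ) * Real.sin θ ^ (2 * k)

/-- Modified Bessel function of the first kind of order `k`. -/
noncomputable def besselI (k : ℕ) (r : ℝ) : ℝ :=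
  (r / 2) ^ k / (Real.sqrt Real.pi * Real.Gamma ((k : ℝ) + 1 / 2)) *
    ∫ θ in (0:ℝ)..Real.pi, Real.exp (r * Real.cos θ) * Real.sin θ ^ (2 * k)

/-- Modified Bessel function of the second kind of order `k`. -/
noncomputable def besselK (k : ℕ) (r : ℝ) : ℝ :=
  ∫ t in Set.Ioi (0:ℝ), Real.exp (-(r * Real.cosh t)) * Real.cosh ((k : ℝ) * t)

/-!
Write `F n r = ∫ θ in 0..π, exp (r cos θ) sin θ ^ n`. The Gamma values at `1/2, 3/2, 5/2` give
`I₀ = F 0 / π`, `I₁ = r F 2 / π`, `I₂ = r² F 4 / (3π)`, so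
`π² (I₁² - I₀ I₂) = r² (F 2² - F 0 F 4 / 3)`.
Integrating by parts in `θ` gives `F n' = r F (n+2) / (n+1)` and the three-term recurrence
`(n+1) F n - (n+2) F (n+2) = r² F (n+4) / (n+3)`. With these, the derivative of the right-hand
side is `(2r/3) F 0 F 4 > 0`; since it vanishes at `r = 0`, it is positive for `r > 0`.
-/

open Real intervalIntegral

noncomputable def besselIntegral (n : ℕ) (r : ℝ) : ℝ :=
  ∫ θ in (0:ℝ)..π, exp (r * cos θ) * sin θ ^ n

lemma hasDerivAt_exp_mul_cos (r θ : ℝ) :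
    HasDerivAt (fun θ => exp (r * cos θ)) (-(r * exp (r * cos θ) * sin θ)) θ := by
  convert ((hasDerivAt_cos θ).const_mul r).exp using 1
  ring

lemma integral_exp_mul_sin_pow_mul_cos (n : ℕ) (r : ℝ) :
    (n + 1) * ∫ θ in (0:ℝ)..π, exp (r * cos θ) * sin θ ^ n * cos θ =
      r * besselIntegral (n + 2) r := by
  have hderiv : ∀ θ ∈ Set.uIcc 0 π, HasDerivAt (fun θ => exp (r * cos θ) * sin θ ^ (n + 1))
      (((n : ℝ) + 1) * (exp (r * cos θ) * sin θ ^ n * cos θ) -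
        r * (exp (r * cos θ) * sin θ ^ (n + 2))) θ := fun θ _ => by
    refine ((hasDerivAt_exp_mul_cos r θ).fun_mul
      ((hasDerivAt_sin θ).fun_pow (n + 1))).congr_deriv ?_
    rw [Nat.add_sub_cancel]
    push_cast
    ring
  rw [besselIntegral, ← intervalIntegral.integral_const_mul,
    ← intervalIntegral.integral_const_mul, ← sub_eq_zero,
    ← integral_sub (Continuous.intervalIntegrable (by fun_prop) _ _)
      (Continuous.intervalIntegrable (by fun_prop) _ _),
    integral_eq_sub_of_hasDerivAt hderiv (Continuous.intervalIntegrable (by fun_prop) _ _)]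
  simp

lemma besselIntegral_sub_besselIntegral (n : ℕ) (r : ℝ) :
    (n + 1) * besselIntegral n r - (n + 2) * besselIntegral (n + 2) r =
      r * ∫ θ in (0:ℝ)..π, exp (r * cos θ) * sin θ ^ (n + 2) * cos θ := by
  have hderiv : ∀ θ ∈ Set.uIcc 0 π,
      HasDerivAt (fun θ => exp (r * cos θ) * sin θ ^ (n + 1) * cos θ)
        (((n : ℝ) + 1) * (exp (r * cos θ) * sin θ ^ n) -
          (n + 2) * (exp (r * cos θ) * sin θ ^ (n + 2)) -
          r * (exp (r * cos θ) * sin θ ^ (n + 2) * cos θ)) θ := fun θ _ => by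
    refine (((hasDerivAt_exp_mul_cos r θ).fun_mul ((hasDerivAt_sin θ).fun_pow (n + 1))).fun_mul
      (hasDerivAt_cos θ)).congr_deriv ?_
    rw [Nat.add_sub_cancel]
    push_cast
    linear_combination ((n + 1) * exp (r * cos θ) * sin θ ^ n) * cos_sq' θ
  rw [besselIntegral, besselIntegral, ← intervalIntegral.integral_const_mul,
    ← intervalIntegral.integral_const_mul, ← intervalIntegral.integral_const_mul,
    ← sub_eq_zero, ← integral_sub (Continuous.intervalIntegrable (by fun_prop) _ _)
      (Continuous.intervalIntegrable (by fun_prop) _ _),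
    ← integral_sub (Continuous.intervalIntegrable (by fun_prop) _ _)
      (Continuous.intervalIntegrable (by fun_prop) _ _),
    integral_eq_sub_of_hasDerivAt hderiv (Continuous.intervalIntegrable (by fun_prop) _ _)]
  simp

lemma hasDerivAt_besselIntegral (n : ℕ) (r : ℝ) :
    HasDerivAt (besselIntegral n) (r * besselIntegral (n + 2) r / (n + 1)) r := by
  have hbound : ∀ θ, ∀ x ∈ Metric.ball r 1,
      ‖exp (x * cos θ) * sin θ ^ n * cos θ‖ ≤ exp (|r| + 1) := fun θ x hx => by
    have hx : |x| ≤ |r| + 1 := by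
      linarith [abs_sub_abs_le_abs_sub x r, (Metric.mem_ball.1 hx).le, Real.dist_eq x r]
    have hcos : x * cos θ ≤ |r| + 1 := by
      calc x * cos θ ≤ |x| * |cos θ| := (abs_mul x (cos θ)).symm ▸ le_abs_self _
        _ ≤ |r| + 1 := (mul_le_of_le_one_right (abs_nonneg x) (abs_cos_le_one θ)).trans hx
    rw [norm_mul, norm_mul, norm_pow, Real.norm_eq_abs, Real.norm_eq_abs, Real.norm_eq_abs,
      abs_exp]
    calc exp (x * cos θ) * |sin θ| ^ n * |cos θ| ≤ exp (|r| + 1) * 1 ^ n * 1 := by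
          gcongr
          exacts [abs_sin_le_one θ, abs_cos_le_one θ]
      _ = exp (|r| + 1) := by ring
  have hderiv := (hasDerivAt_integral_of_dominated_loc_of_deriv_le
    (μ := volume) (a := 0) (b := π) (F := fun x θ => exp (x * cos θ) * sin θ ^ n)
    (bound := fun _ => exp (|r| + 1))
    (Metric.ball_mem_nhds r one_pos)
    (Eventually.of_forall fun x => (Continuous.aestronglyMeasurable (by fun_prop)).restrict)
    (Continuous.intervalIntegrable (by fun_prop) _ _)
    (Continuous.aestronglyMeasurable (by fun_prop)).restrict
    (Eventually.of_forall fun θ _ => hbound θ)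
    intervalIntegrable_const
    (Eventually.of_forall fun θ _ x _ => by
      simpa [mul_comm, mul_assoc, mul_left_comm] using
        (((hasDerivAt_id x).mul_const (cos θ)).exp).mul_const (sin θ ^ n))).2
  rw [← integral_exp_mul_sin_pow_mul_cos, mul_div_cancel_left₀ _ (by positivity)]
  exact hderiv

lemma besselIntegral_recurrence (n : ℕ) (r : ℝ) :
    (n + 1) * besselIntegral n r - (n + 2) * besselIntegral (n + 2) r =
      r ^ 2 * besselIntegral (n + 4) r / (n + 3) := by
  have h := integral_exp_mul_sin_pow_mul_cos (n + 2) r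
  push_cast at h
  rw [besselIntegral_sub_besselIntegral, eq_div_iff (by positivity)]
  linear_combination r * h

lemma besselIntegral_pos (n : ℕ) (r : ℝ) : 0 < besselIntegral n r :=
  intervalIntegral_pos_of_pos_on (Continuous.intervalIntegrable (by fun_prop) _ _)
    (fun θ hθ => mul_pos (exp_pos _) (pow_pos (sin_pos_of_pos_of_lt_pi hθ.1 hθ.2) n)) pi_pos

noncomputable def turanFunction (r : ℝ) : ℝ :=
  r ^ 2 * (besselIntegral 2 r ^ 2 - besselIntegral 0 r * besselIntegral 4 r / 3)

lemma hasDerivAt_turanFunction (r : ℝ) :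
    HasDerivAt turanFunction (2 * r / 3 * besselIntegral 0 r * besselIntegral 4 r) r := by
  have h0 := hasDerivAt_besselIntegral 0 r
  have h2 := hasDerivAt_besselIntegral 2 r
  have h4 := hasDerivAt_besselIntegral 4 r
  have rec0 := besselIntegral_recurrence 0 r
  have rec2 := besselIntegral_recurrence 2 r
  push_cast at h0 h2 h4 rec0 rec2
  refine (((hasDerivAt_pow 2 r).fun_mul
    ((h2.fun_pow 2).fun_sub ((h0.fun_mul h4).div_const 3)))).congr_deriv ?_
  linear_combination (r / 3 * besselIntegral 0 r) * rec2 - (r * besselIntegral 2 r) * rec0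

lemma turanFunction_pos {r : ℝ} (hr : 0 < r) : 0 < turanFunction r := by
  have hmono : StrictMonoOn turanFunction (Set.Icc 0 r) :=
    strictMonoOn_of_deriv_pos (convex_Icc 0 r)
      (fun x _ => (hasDerivAt_turanFunction x).continuousAt.continuousWithinAt)
      (fun x hx => by
        rw [interior_Icc] at hx
        rw [(hasDerivAt_turanFunction x).deriv]
        have hx : 0 < 2 * x / 3 := by linarith [hx.1]
        exact mul_pos (mul_pos hx (besselIntegral_pos 0 x)) (besselIntegral_pos 4 x))
  simpa [turanFunction] using
    hmono (Set.left_mem_Icc.2 hr.le) (Set.right_mem_Icc.2 hr.le) hr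

lemma besselI_eq_besselIntegral (k : ℕ) (r : ℝ) :
    besselI k r = (r / 2) ^ k / (√π * Gamma (k + 1 / 2)) * besselIntegral (2 * k) r :=
  rfl

lemma besselI_zero (r : ℝ) : besselI 0 r = besselIntegral 0 r / π := by
  rw [besselI_eq_besselIntegral]
  norm_num [Gamma_one_half_eq, mul_self_sqrt pi_pos.le, inv_mul_eq_div]

lemma besselI_one (r : ℝ) : besselI 1 r = r * besselIntegral 2 r / π := by
  have hΓ : Gamma (1 + 1 / 2) = √π / 2 := by
    rw [add_comm, Gamma_add_one (by norm_num), Gamma_one_half_eq]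
    ring
  rw [besselI_eq_besselIntegral, Nat.cast_one, hΓ]
  field_simp
  rw [sq_sqrt pi_pos.le]
  ring

lemma besselI_two (r : ℝ) : besselI 2 r = r ^ 2 * besselIntegral 4 r / (3 * π) := by
  have hΓ : Gamma (2 + 1 / 2) = 3 * √π / 4 := by
    rw [show (2 + 1 / 2 : ℝ) = 1 / 2 + 1 + 1 by norm_num, Gamma_add_one (by norm_num),
      Gamma_add_one (by norm_num), Gamma_one_half_eq]
    ring
  rw [besselI_eq_besselIntegral, Nat.cast_ofNat, hΓ]
  field_simp
  rw [sq_sqrt pi_pos.le]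
  ring

theorem besselI_sq_sub_pos (ε : ℝ) (hε : 0 < ε) :
    0 < besselI 1 ε ^ 2 - besselI 0 ε * besselI 2 ε := by
  have hturan : besselI 1 ε ^ 2 - besselI 0 ε * besselI 2 ε = turanFunction ε / π ^ 2 := by
    rw [besselI_zero, besselI_one, besselI_two, turanFunction]
    field_simp
  rw [hturan]
  exact div_pos (turanFunction_pos hε) (by positivity)
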